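/- Let p be an odd prime, n ≥ 3, and M_n(p) as above. If h ∈ ⟨a^p, b⟩ but h ∉ ⟨a^p⟩, then the centralizer of h in M_n(p) is ⟨a^p, b⟩. -/

import Mathlib

/-!
Write `a = Ma p n`, `b = Mb p n` and `K = ⟨a^p, b⟩`. Since `b⁻¹ a b = a · a^(p^(n-2))` and
`(a^(p^(n-2)))^p = 1`, the element `b` commutes with `a^p`, so `K` is abelian; conjugation by
`a^(±1)` maps `b` to `b a^(±p^(n-2)) ∈ K`, so `K` is normal and every element of `M_n(p)` is
`a^k u` with `u ∈ K`. Thus `K` centralises `h`, and if `a^k u` centralises `h = (a^p)^i b^l` then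
`a^k` commutes with `b^l`, where `p ∤ l` because `h ∉ ⟨a^p⟩`. In the affine representation
`a ↦ (x ↦ x + 1)`, `b ↦ (x ↦ (1 + p^(n-2))⁻¹ x)` of `M_n(p)` on `ZMod (p^(n-1))` this reads
`(1 + p^(n-2))^(-l) k = k`; as `1 + p^(n-2)` has order `p` there, `p ∣ k` and `a^k u ∈ K`.
-/

/-- Relations for the modular maximal-cyclic group
`M_n(p) = ⟨a, b ∣ a^(p^(n-1)) = 1, b^p = 1, b⁻¹ a b = a^(p^(n-2)+1)⟩`. -/
def Mrels (p n : ℕ) : Set (FreeGroup (Fin 2)) :=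
  {FreeGroup.of 0 ^ p ^ (n - 1), FreeGroup.of 1 ^ p,
    (FreeGroup.of 1)⁻¹ * FreeGroup.of 0 * FreeGroup.of 1 *
      (FreeGroup.of 0 ^ (p ^ (n - 2) + 1))⁻¹}

/-- The modular maximal-cyclic group `M_n(p)`, as a presented group. -/
abbrev Mgrp (p n : ℕ) := PresentedGroup (Mrels p n)

/-- The generator `a` of `M_n(p)`. -/
def Ma (p n : ℕ) : Mgrp p n := PresentedGroup.of 0

/-- The generator `b` of `M_n(p)`. -/
def Mb (p n : ℕ) : Mgrp p n := PresentedGroup.of 1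

open Subgroup

namespace Subgroup

variable {G : Type*} [Group G]

theorem exists_zpow_mul_zpow_of_mem_closure_pair {x y g : G} (hxy : Commute x y)
    (hg : g ∈ closure {x, y}) : ∃ i j : ℤ, x ^ i * y ^ j = g := by
  induction hg using closure_induction_left with
  | one => exact ⟨0, 0, by simp⟩
  | mul_left s hs _ _ ih =>
    obtain ⟨i, j, rfl⟩ := ih
    rcases hs with rfl | rfl
    · exact ⟨1 + i, j, by rw [zpow_one_add, mul_assoc]⟩
    · exact ⟨i, 1 + j, by rw [zpow_one_add, ← mul_assoc, (hxy.zpow_left i).eq, mul_assoc]⟩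
  | inv_mul_cancel s hs _ _ ih =>
    obtain ⟨i, j, rfl⟩ := ih
    rcases hs with rfl | rfl
    · exact ⟨-1 + i, j, by rw [zpow_add, zpow_neg_one, mul_assoc]⟩
    · exact ⟨i, -1 + j, by
        rw [zpow_add, zpow_neg_one, ← mul_assoc, (hxy.inv_right.zpow_left i).eq, mul_assoc]⟩

theorem isMulCommutative_closure_pair {x y : G} (hxy : Commute x y) :
    IsMulCommutative (closure {x, y}) :=
  isMulCommutative_closure <| by
    rintro _ (rfl | rfl) _ (rfl | rfl) <;> first | rfl | exact hxy.eq | exact hxy.eq.symm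

theorem normal_closure_of_conj_mem {S T : Set G} (hT : closure T = ⊤)
    (hconj : ∀ t ∈ T, ∀ s ∈ S, t * s * t⁻¹ ∈ closure S ∧ t⁻¹ * s * t ∈ closure S) :
    (closure S).Normal := by
  have conj_mem {g x : G} (hg : ∀ s ∈ S, g * s * g⁻¹ ∈ closure S) (hx : x ∈ closure S) :
      g * x * g⁻¹ ∈ closure S :=
    (closure_le ((closure S).comap (MulAut.conj g).toMonoidHom)).mpr hg hx
  rw [← normalizer_eq_top_iff, eq_top_iff, ← hT, closure_le]
  intro t ht
  refine mem_normalizer_iff.mpr fun x => ⟨conj_mem fun s hs => (hconj t ht s hs).1, fun hx => ?_⟩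
  simpa [mul_assoc] using
    conj_mem (g := t⁻¹) (fun s hs => by simpa using (hconj t ht s hs).2) hx

theorem exists_zpow_mul_mem_of_closure_pair_eq_top {K : Subgroup G} [K.Normal] {a b : G}
    (hG : closure {a, b} = ⊤) (hb : b ∈ K) (g : G) : ∃ k : ℤ, ∃ u ∈ K, a ^ k * u = g := by
  have hsup : zpowers a ⊔ K = ⊤ := by
    rw [eq_top_iff, ← hG, closure_le, Set.insert_subset_iff, Set.singleton_subset_iff]
    exact ⟨mem_sup_left (mem_zpowers a), mem_sup_right hb⟩
  obtain ⟨_, ⟨k, rfl⟩, u, hu, rfl⟩ := mem_sup_of_normal_right.mp (hsup ▸ mem_top g)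
  exact ⟨k, u, hu, rfl⟩

end Subgroup

section InvMulMulEqPowSucc

variable {G : Type*} [Group G] {a b : G} {N p : ℕ}

theorem commute_pow_of_inv_mul_mul_eq_pow_succ
    (hab : b⁻¹ * a * b = a ^ (N + 1)) (ha : a ^ (N * p) = 1) : Commute (a ^ p) b := by
  have hconj : b⁻¹ * a ^ p * b = a ^ p := by
    have := conj_pow (a := b⁻¹) (b := a) (i := p)
    rw [inv_inv] at this
    rw [← this, hab, ← pow_mul, add_one_mul, pow_add, ha, one_mul]
  calc a ^ p * b = b * (b⁻¹ * a ^ p * b) := by group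
    _ = b * a ^ p := by rw [hconj]

theorem normal_closure_pow_of_inv_mul_mul_eq_pow_succ (hG : closure {a, b} = ⊤)
    (hab : b⁻¹ * a * b = a ^ (N + 1)) (hpN : p ∣ N) :
    (closure {a ^ p, b}).Normal := by
  have hap : a ^ p ∈ closure {a ^ p, b} := subset_closure (.inl rfl)
  have hb : b ∈ closure {a ^ p, b} := subset_closure (.inr rfl)
  have hz : a ^ N ∈ closure {a ^ p, b} := by
    obtain ⟨c, rfl⟩ := hpN
    rw [pow_mul]
    exact pow_mem hap c
  have hconj_b : a * b * a⁻¹ = b * a ^ N := by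
    calc a * b * a⁻¹ = b * (b⁻¹ * a * b) * a⁻¹ := by group
      _ = b * a ^ N := by rw [hab]; group
  have hconj_inv_b : a⁻¹ * b * a = b * (a ^ N)⁻¹ := by
    calc a⁻¹ * b * a = b * (b⁻¹ * a * b)⁻¹ * a := by group
      _ = b * (a ^ N)⁻¹ := by rw [hab]; group
  refine normal_closure_of_conj_mem hG ?_
  rintro t (rfl | rfl) s hs
  · rcases hs with rfl | rfl
    · exact ⟨by rwa [(Commute.self_pow t p).eq, mul_inv_cancel_right],
        by rwa [mul_assoc, ← (Commute.self_pow t p).eq, inv_mul_cancel_left]⟩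
    · exact ⟨hconj_b ▸ mul_mem hb hz, hconj_inv_b ▸ mul_mem hb (inv_mem hz)⟩
  · have hs := subset_closure hs
    exact ⟨mul_mem (mul_mem hb hs) (inv_mem hb), mul_mem (mul_mem (inv_mem hb) hs) hb⟩

end InvMulMulEqPowSucc

theorem one_add_pow_of_sq_eq_zero {R : Type*} [CommRing R] {t : R} (ht : t ^ 2 = 0) (l : ℕ) :
    (1 + t) ^ l = 1 + l * t := by
  induction l with
  | zero => simp
  | succ l ih => rw [pow_succ, ih]; push_cast; linear_combination (l : R) * ht

theorem ZMod.orderOf_one_add_prime_pow {p n : ℕ} (hp : p.Prime) (hn : 3 ≤ n) :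
    orderOf (1 + (p : ZMod (p ^ (n - 1))) ^ (n - 2)) = p := by
  have := Fact.mk hp
  have hpow {k : ℕ} : (p : ZMod (p ^ (n - 1))) ^ k = 0 ↔ n - 1 ≤ k := by
    rw [← Nat.cast_pow, ZMod.natCast_eq_zero_iff, Nat.pow_dvd_pow_iff_le_right hp.one_lt]
  have hsq : ((p : ZMod (p ^ (n - 1))) ^ (n - 2)) ^ 2 = 0 := by
    rw [← pow_mul, hpow]; omega
  refine orderOf_eq_prime ?_ ?_
  · rw [one_add_pow_of_sq_eq_zero hsq, ← pow_succ', hpow.mpr (by omega), add_zero]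
  · rw [Ne, add_eq_left, hpow]; omega

namespace Mgrp

variable {p n : ℕ}

theorem Ma_pow_eq_one : Ma p n ^ p ^ (n - 1) = 1 := by
  simpa [Ma, PresentedGroup.of] using
    PresentedGroup.one_of_mem (rels := Mrels p n) (Set.mem_insert _ _)

theorem Mb_pow_eq_one : Mb p n ^ p = 1 := by
  simpa [Mb, PresentedGroup.of] using
    PresentedGroup.one_of_mem (rels := Mrels p n) (Set.mem_insert_of_mem _ (Set.mem_insert _ _))

theorem inv_Mb_mul_Ma_mul_Mb : (Mb p n)⁻¹ * Ma p n * Mb p n = Ma p n ^ (p ^ (n - 2) + 1) := by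
  simpa [Ma, Mb, PresentedGroup.of, mul_inv_eq_one] using PresentedGroup.one_of_mem
    (rels := Mrels p n) (Set.mem_insert_of_mem _ (Set.mem_insert_of_mem _ rfl))

theorem closure_Ma_Mb : closure {Ma p n, Mb p n} = ⊤ := by
  rw [← PresentedGroup.closure_range_of (Mrels p n)]
  congr
  ext g
  simp [Fin.exists_fin_two, Ma, Mb, eq_comm]

theorem exists_monoidHom {G : Type*} [Group G] {A B : G} (hA : A ^ p ^ (n - 1) = 1)
    (hB : B ^ p = 1) (hAB : B⁻¹ * A * B = A ^ (p ^ (n - 2) + 1)) :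
    ∃ φ : Mgrp p n →* G, φ (Ma p n) = A ∧ φ (Mb p n) = B := by
  have hrels : ∀ r ∈ Mrels p n, FreeGroup.lift ![A, B] r = 1 := by
    rintro r (rfl | rfl | rfl) <;> simp [hA, hB, hAB]
  exact ⟨PresentedGroup.toGroup hrels, PresentedGroup.toGroup.of hrels,
    PresentedGroup.toGroup.of hrels⟩

theorem commute_Ma_pow_Mb (hn : 2 ≤ n) : Commute (Ma p n ^ p) (Mb p n) :=
  commute_pow_of_inv_mul_mul_eq_pow_succ inv_Mb_mul_Ma_mul_Mb
    (by rw [← pow_succ, show n - 2 + 1 = n - 1 by omega, Ma_pow_eq_one])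

theorem normal_closure_Ma_pow_Mb (hn : 3 ≤ n) : (closure {Ma p n ^ p, Mb p n}).Normal :=
  normal_closure_pow_of_inv_mul_mul_eq_pow_succ closure_Ma_Mb inv_Mb_mul_Ma_mul_Mb
    (dvd_pow_self p (by omega))

theorem dvd_or_dvd_of_commute (hp : p.Prime) (hn : 3 ≤ n) {k l : ℤ}
    (h : Commute (Ma p n ^ k) (Mb p n ^ l)) : (p : ℤ) ∣ k ∨ (p : ℤ) ∣ l := by
  have hr := ZMod.orderOf_one_add_prime_pow hp hn
  obtain ⟨u, hu⟩ := IsUnit.of_pow_eq_one (hr ▸ pow_orderOf_eq_one _) hp.ne_zero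
  have hu_order : orderOf u = p := by rw [← orderOf_units, hu, hr]
  set A := Equiv.addLeft (1 : ZMod (p ^ (n - 1)))
  set B := MulAction.toPermHom (ZMod (p ^ (n - 1)))ˣ (ZMod (p ^ (n - 1))) u⁻¹
  have hA : A ^ p ^ (n - 1) = 1 := by simp [A]
  have hB : B ^ p = 1 := by
    rw [← map_pow, inv_pow, orderOf_dvd_iff_pow_eq_one.mp (dvd_of_eq hu_order), inv_one, map_one]
  have hAB : B⁻¹ * A * B = A ^ (p ^ (n - 2) + 1) := by
    have hu_one : u • (1 : ZMod (p ^ (n - 1))) = 1 + p ^ (n - 2) := by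
      rw [Units.smul_def, hu, smul_eq_mul, mul_one]
    ext x
    simp [A, B, smul_add, hu_one, add_left_comm, add_comm]
  obtain ⟨φ, hφa, hφb⟩ := exists_monoidHom hA hB hAB
  have hBl : B ^ l = MulAction.toPermHom _ _ (u⁻¹ ^ l) := (map_zpow _ _ _).symm
  have hk : (k : ZMod (p ^ (n - 1))) = ↑(u ^ l)⁻¹ * k := by
    have := congr($(congrArg φ h.eq) 0)
    rw [map_mul, map_mul, map_zpow, map_zpow, hφa, hφb, hBl] at this
    simpa [A, Units.smul_def] using this
  refine or_iff_not_imp_left.mpr fun hpk => ?_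
  have hk_unit : IsUnit (k : ZMod (p ^ (n - 1))) := by
    rw [ZMod.coe_int_isUnit_iff_isCoprime, Nat.cast_pow]
    exact ((Nat.prime_iff_prime_int.mp hp).coprime_iff_not_dvd.mpr hpk).pow_left
  have hul : (u ^ l)⁻¹ = 1 :=
    Units.ext (hk_unit.mul_right_cancel (by rw [← hk, Units.val_one, one_mul]))
  rw [← hu_order]
  exact orderOf_dvd_iff_zpow_eq_one.mpr (inv_eq_one.mp hul)

end Mgrp

theorem Mgrp_centralizer_inside_general (p n : ℕ) (hp : p.Prime) (hn : 3 ≤ n)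
    (h : Mgrp p n) (hmem : h ∈ Subgroup.closure {Ma p n ^ p, Mb p n})
    (hnot : h ∉ Subgroup.zpowers (Ma p n ^ p)) :
    Subgroup.centralizer {h} = Subgroup.closure {Ma p n ^ p, Mb p n} := by
  have hcomm : Commute (Ma p n ^ p) (Mb p n) := Mgrp.commute_Ma_pow_Mb (by omega)
  have := isMulCommutative_closure_pair hcomm
  have := Mgrp.normal_closure_Ma_pow_Mb (p := p) hn
  refine le_antisymm (fun g hg => ?_) fun g hg =>
    mem_centralizer_singleton_iff.mpr (setLike_mul_comm hg hmem)
  obtain ⟨i, l, rfl⟩ := exists_zpow_mul_zpow_of_mem_closure_pair hcomm hmem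
  have hl : ¬ (p : ℤ) ∣ l := by
    rintro ⟨c, rfl⟩
    rw [zpow_mul, zpow_natCast, Mgrp.Mb_pow_eq_one, one_zpow, mul_one] at hnot
    exact hnot (zpow_mem_zpowers _ _)
  obtain ⟨k, u, hu, rfl⟩ := exists_zpow_mul_mem_of_closure_pair_eq_top
    (K := closure {Ma p n ^ p, Mb p n}) Mgrp.closure_Ma_Mb (subset_closure (.inr rfl)) g
  have hk : Commute (Ma p n ^ k) (Mb p n ^ l) := by
    have hg : Commute (Ma p n ^ k * u) ((Ma p n ^ p) ^ i * Mb p n ^ l) :=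
      mem_centralizer_singleton_iff.mp hg
    have hak : Commute (Ma p n ^ k) ((Ma p n ^ p) ^ i * Mb p n ^ l) := by
      simpa using hg.mul_left (Commute.inv_left (setLike_mul_comm hu hmem))
    simpa using (((Commute.refl _).pow_right p).zpow_zpow k i).inv_right.mul_right hak
  obtain ⟨c, rfl⟩ := (Mgrp.dvd_or_dvd_of_commute hp hn hk).resolve_right hl
  rw [zpow_mul, zpow_natCast]
  exact mul_mem (zpow_mem (subset_closure (.inl rfl)) c) hu

theorem Mgrp_centralizer_inside (p n : ℕ) (hp : p.Prime) (hodd : Odd p) (hn : 3 ≤ n)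
    (h : Mgrp p n) (hmem : h ∈ Subgroup.closure {Ma p n ^ p, Mb p n})
    (hnot : h ∉ Subgroup.zpowers (Ma p n ^ p)) :
    Subgroup.centralizer {h} = Subgroup.closure {Ma p n ^ p, Mb p n} :=
  Mgrp_centralizer_inside_general p n hp hn h hmem hnot
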